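/- Define f₁ : [0,1] → [0,1] by f₁(x) = 3x for 0 ≤ x ≤ 1/4, f₁(x) = 3/4 for 1/4 ≤ x ≤ 1/2, f₁(x) = −3x + 9/4 for 1/2 ≤ x ≤ 3/4, and f₁(x) = x − 3/4 for 3/4 ≤ x ≤ 1. Then f₁ is a continuous self-map of [0,1] and for every n ≥ 2 there is no map g : [0,1] → [0,1] (not even a discontinuous one) with gⁿ = f₁. -/
import Mathlib


/-- The piecewise affine map `f₁` of Example 3: `f₁(x) = 3x` on `[0,1/4]`,
`f₁(x) = 3/4` on `[1/4,1/2]`, `f₁(x) = -3x + 9/4` on `[1/2,3/4]`, and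
`f₁(x) = x - 3/4` on `[3/4,1]`. -/
noncomputable def f₁ : ℝ → ℝ := fun x =>
  if x ≤ 1 / 4 then 3 * x
  else if x ≤ 1 / 2 then 3 / 4
  else if x ≤ 3 / 4 then -3 * x + 9 / 4
  else x - 3 / 4

lemma f1_mem {x : ℝ} (hx : x ∈ Set.Icc (0:ℝ) 1) : f₁ x ∈ Set.Icc (0:ℝ) 1 := by
  obtain ⟨h0, h1⟩ := hx
  unfold f₁
  split_ifs <;> constructor <;> linarith

lemma f1_cont : Continuous f₁ := by
  unfold f₁
  apply Continuous.if_le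
  · exact continuous_const.mul continuous_id'
  · apply Continuous.if_le
    · exact continuous_const
    · apply Continuous.if_le
      · exact (continuous_const.mul continuous_id').add continuous_const
      · exact continuous_id'.sub continuous_const
      · exact continuous_id'
      · exact continuous_const
      · intro x hx; rw [hx]; norm_num
    · exact continuous_id'
    · exact continuous_const
    · intro x hx; rw [hx]; norm_num
  · exact continuous_id'
  · exact continuous_const
  · intro x hx; rw [hx]; norm_num

lemma f1_fix {x : ℝ} (hx : x ∈ Set.Icc (0:ℝ) 1) (h : f₁ x = x) :
    x = 0 ∨ x = 9/16 := by
  obtain ⟨h0, h1⟩ := hx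
  unfold f₁ at h
  split_ifs at h with e1 e2 e3
  · left; linarith
  · exfalso; linarith
  · right; linarith
  · exfalso; linarith

lemma f1_pre916 {x : ℝ} (hx : x ∈ Set.Icc (0:ℝ) 1) (h : f₁ x = 9/16) :
    x = 3/16 ∨ x = 9/16 := by
  obtain ⟨h0, h1⟩ := hx
  unfold f₁ at h
  split_ifs at h with e1 e2 e3
  · left; linarith
  · exfalso; linarith
  · right; linarith
  · exfalso; linarith

lemma f1_finite {F : Set ℝ} (hF : F.Finite) (h34 : (3/4:ℝ) ∉ F) :
    {x : ℝ | f₁ x ∈ F}.Finite := by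
  have h1 : Function.Injective (fun x : ℝ => 3 * x) := fun a b h => by
    dsimp at h; linarith
  have h3 : Function.Injective (fun x : ℝ => -3 * x + 9/4) := fun a b h => by
    dsimp at h; linarith
  have h4 : Function.Injective (fun x : ℝ => x - 3/4) := fun a b h => by
    dsimp at h; linarith
  refine Set.Finite.subset
    (((hF.preimage h1.injOn).union (hF.preimage h3.injOn)).union
      (hF.preimage h4.injOn)) ?_
  intro x hx
  simp only [Set.mem_setOf_eq, f₁] at hx
  split_ifs at hx with e1 e2 e3
  · exact Or.inl (Or.inl hx)
  · exact absurd hx h34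
  · exact Or.inl (Or.inr hx)
  · exact Or.inr hx

/-- **Example 3, map `f₁`.** The map `f₁` restricts to a continuous self-map
of `[0,1]` that has no iterative root (even discontinuous) of any order
`n ≥ 2`. -/
theorem f₁_continuous_and_no_iterative_root :
    ∃ f : Set.Icc (0 : ℝ) 1 → Set.Icc (0 : ℝ) 1,
      (∀ x : Set.Icc (0 : ℝ) 1, (f x : ℝ) = f₁ x) ∧
      Continuous f ∧
      ∀ n : ℕ, 2 ≤ n → ¬ ∃ g : Set.Icc (0 : ℝ) 1 → Set.Icc (0 : ℝ) 1,
        g^[n] = f := by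
  classical
  refine ⟨fun x => ⟨f₁ x, f1_mem x.2⟩, fun x => rfl,
    (f1_cont.comp continuous_subtype_val).subtype_mk _, ?_⟩
  rintro n hn ⟨g, hg⟩
  obtain ⟨m, rfl⟩ : ∃ m, n = m + 1 := ⟨n - 1, by omega⟩
  have hval : ∀ x : Set.Icc (0:ℝ) 1, ((g^[m+1] x : ℝ)) = f₁ x := by
    intro x; rw [hg]
  have hcomm : ∀ x, g^[m+1] (g x) = g (g^[m+1] x) := fun x =>
    (Function.iterate_succ_apply g (m+1) x).symm.trans
      (Function.iterate_succ_apply' g (m+1) x)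
  have hcommf : ∀ x, f₁ ((g x : ℝ)) = ((g (g^[m+1] x) : ℝ)) := by
    intro x; rw [← hval (g x), hcomm x]
  -- named points
  set z0 : Set.Icc (0:ℝ) 1 := ⟨0, by norm_num⟩ with hz0def
  set z116 : Set.Icc (0:ℝ) 1 := ⟨1/16, by norm_num⟩ with hz116def
  set z316 : Set.Icc (0:ℝ) 1 := ⟨3/16, by norm_num⟩ with hz316def
  set z916 : Set.Icc (0:ℝ) 1 := ⟨9/16, by norm_num⟩ with hz916def
  set z34 : Set.Icc (0:ℝ) 1 := ⟨3/4, by norm_num⟩ with hz34def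
  have hF0 : g^[m+1] z0 = z0 := Subtype.ext (by
    rw [hval]; show f₁ 0 = 0; norm_num [f₁])
  have hF916 : g^[m+1] z916 = z916 := Subtype.ext (by
    rw [hval]; show f₁ (9/16) = 9/16; norm_num [f₁])
  have hF316 : g^[m+1] z316 = z916 := Subtype.ext (by
    rw [hval]; show f₁ (3/16) = 9/16; norm_num [f₁])
  have hF116 : g^[m+1] z116 = z316 := Subtype.ext (by
    rw [hval]; show f₁ (1/16) = 3/16; norm_num [f₁])
  have hF34 : g^[m+1] z34 = z0 := Subtype.ext (by
    rw [hval]; show f₁ (3/4) = 0; norm_num [f₁])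
  have hfix : ∀ x : Set.Icc (0:ℝ) 1, g^[m+1] x = x → x = z0 ∨ x = z916 := by
    intro x hx
    have h : f₁ ↑x = ↑x := by rw [← hval x, hx]
    rcases f1_fix x.2 h with h | h
    · exact Or.inl (Subtype.ext h)
    · exact Or.inr (Subtype.ext h)
  have hpre916 : ∀ x : Set.Icc (0:ℝ) 1, g^[m+1] x = z916 → x = z316 ∨ x = z916 := by
    intro x hx
    have h : f₁ ↑x = 9/16 := by
      have := congrArg Subtype.val hx
      rw [hval x] at this
      exact this
    rcases f1_pre916 x.2 h with h | h
    · exact Or.inl (Subtype.ext h)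
    · exact Or.inr (Subtype.ext h)
  have hg0fix : g z0 = z0 ∨ g z0 = z916 := hfix _ (by rw [hcomm, hF0])
  have hg916fix : g z916 = z0 ∨ g z916 = z916 := hfix _ (by rw [hcomm, hF916])
  rcases hg0fix with h00 | h09
  · rcases hg916fix with h90 | h99
    · -- g 0 = 0, g (9/16) = 0 : impossible
      have hzz : g^[m+1] z916 = z0 := by
        rw [Function.iterate_succ_apply, h90]
        exact Function.iterate_fixed h00 m
      rw [hF916] at hzz
      have := congrArg Subtype.val hzz
      norm_num [hz916def, hz0def] at this
    · -- g fixes 0 and 9/16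
      obtain ⟨k, rfl⟩ : ∃ k, m = k + 1 := ⟨m - 1, by omega⟩
      have h316 : g z316 = z316 ∨ g z316 = z916 :=
        hpre916 _ (by rw [hcomm, hF316, h99])
      have h316' : g z316 = z916 := by
        rcases h316 with h | h
        · exfalso
          have h2 := Function.iterate_fixed h (k+1+1)
          rw [hF316] at h2
          have := congrArg Subtype.val h2
          norm_num [hz916def, hz316def] at this
        · exact h
      have h116 : g z116 = z316 ∨ g z116 = z916 :=
        hpre916 _ (by rw [hcomm, hF116, h316'])
      have hz : g^[k+1+1] z116 = z916 := by
        rw [Function.iterate_succ_apply]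
        rcases h116 with h | h <;> rw [h]
        · rw [Function.iterate_succ_apply, h316']
          exact Function.iterate_fixed h99 k
        · exact Function.iterate_fixed h99 (k+1)
      rw [hF116] at hz
      have := congrArg Subtype.val hz
      norm_num [hz916def, hz316def] at this
  · -- g 0 = 9/16
    have h90 : g z916 = z0 := by
      rcases hg916fix with h | h
      · exact h
      · exfalso
        have hzz : g^[m+1] z0 = z916 := by
          rw [Function.iterate_succ_apply, h09]
          exact Function.iterate_fixed h m
        rw [hF0] at hzz
        have := congrArg Subtype.val hzz
        norm_num [hz916def, hz0def] at this
    -- cardinality argument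
    have hF1fin : ({3/16, 9/16} : Set ℝ).Finite :=
      (Set.finite_singleton _).insert _
    have hF2fin : {x : ℝ | f₁ x ∈ ({3/16, 9/16} : Set ℝ)}.Finite :=
      f1_finite hF1fin (by norm_num)
    have h34notF2 : (3/4:ℝ) ∉ {x : ℝ | f₁ x ∈ ({3/16, 9/16} : Set ℝ)} := by
      simp only [Set.mem_setOf_eq]
      norm_num [f₁]
    have hTfin :
        {x : ℝ | f₁ x ∈ {y : ℝ | f₁ y ∈ ({3/16, 9/16} : Set ℝ)}}.Finite :=
      f1_finite hF2fin h34notF2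
    have hd : g z34 = z316 ∨ g z34 = z916 :=
      hpre916 _ (by rw [hcomm, hF34, h09])
    have hdF1 : ((g z34 : ℝ)) ∈ ({3/16, 9/16} : Set ℝ) := by
      rcases hd with h | h <;> rw [h]
      · exact Or.inl rfl
      · exact Or.inr rfl
    have hmemI : ∀ c ∈ Set.Icc (1/4:ℝ) (1/2), c ∈ Set.Icc (0:ℝ) 1 := by
      intro c hc; obtain ⟨h1, h2⟩ := hc; constructor <;> linarith
    have hmem3 : ∀ c ∈ Set.Icc (1/4:ℝ) (1/2), c / 3 ∈ Set.Icc (0:ℝ) 1 := by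
      intro c hc; obtain ⟨h1, h2⟩ := hc; constructor <;> linarith
    have hfxc : ∀ c (hc : c ∈ Set.Icc (1/4:ℝ) (1/2)),
        g^[m+1] ⟨c/3, hmem3 c hc⟩ = ⟨c, hmemI c hc⟩ := by
      intro c hc
      refine Subtype.ext ?_
      rw [hval]
      show f₁ (c/3) = c
      unfold f₁
      rw [if_pos (show c/3 ≤ 1/4 by obtain ⟨h1, h2⟩ := hc; linarith)]
      ring
    have hfcI : ∀ c (hc : c ∈ Set.Icc (1/4:ℝ) (1/2)),
        g^[m+1] ⟨c, hmemI c hc⟩ = z34 := by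
      intro c hc
      obtain ⟨h1, h2⟩ := hc
      refine Subtype.ext ?_
      rw [hval]
      show f₁ c = 3/4
      unfold f₁
      rcases le_or_gt c (1/4) with h | h
      · rw [if_pos h]; linarith
      · rw [if_neg (not_le.mpr h), if_pos h2]
    set φ : ℝ → ℝ := fun c =>
      if h : c / 3 ∈ Set.Icc (0:ℝ) 1 then ((g ⟨c/3, h⟩ : Set.Icc (0:ℝ) 1) : ℝ)
      else 0 with hφ
    have hφval : ∀ c (hc : c ∈ Set.Icc (1/4:ℝ) (1/2)),
        φ c = ((g ⟨c/3, hmem3 c hc⟩ : Set.Icc (0:ℝ) 1) : ℝ) := by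
      intro c hc
      rw [hφ]
      exact dif_pos (hmem3 c hc)
    have himg : φ '' Set.Icc (1/4:ℝ) (1/2) ⊆
        {x : ℝ | f₁ x ∈ {y : ℝ | f₁ y ∈ ({3/16, 9/16} : Set ℝ)}} := by
      rintro y ⟨c, hc, rfl⟩
      rw [hφval c hc]
      simp only [Set.mem_setOf_eq]
      rw [hcommf, hfxc c hc, hcommf, hfcI c hc]
      exact hdF1
    have hinj : Set.InjOn φ (Set.Icc (1/4:ℝ) (1/2)) := by
      intro c₁ h₁ c₂ h₂ heq
      rw [hφval c₁ h₁, hφval c₂ h₂] at heq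
      have heq' : g ⟨c₁/3, hmem3 c₁ h₁⟩ = g ⟨c₂/3, hmem3 c₂ h₂⟩ :=
        Subtype.ext heq
      have h2 : g^[m+1] ⟨c₁/3, hmem3 c₁ h₁⟩ = g^[m+1] ⟨c₂/3, hmem3 c₂ h₂⟩ := by
        rw [Function.iterate_succ_apply, Function.iterate_succ_apply, heq']
      rw [hfxc c₁ h₁, hfxc c₂ h₂] at h2
      exact congrArg Subtype.val h2
    have hfin : (Set.Icc (1/4:ℝ) (1/2)).Finite :=
      Set.Finite.of_finite_image (hTfin.subset himg) hinj
    exact (Set.Icc_infinite (by norm_num)) hfin
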